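/- arXiv:0706.1785 — 2 statements merged into one kernel-verified Lean document; each statement's English description precedes it below -/
import Mathlib

section
/- Every su(2) block for ψ contains an even number of qubits. -/
open scoped Matrix

noncomputable section

/-- The `n`-qubit Hilbert space `(ℂ²)^{⊗n}`, realized as functions `(Fin n → Fin 2) → ℂ`. -/
abbrev QState (n : ℕ) := (Fin n → Fin 2) → ℂ

/-- The ambient real vector space `ℝ × (Fin n → M₂(ℂ))` containing `u(1) ⊕ su(2)^n`. -/
abbrev GV (n : ℕ) := ℝ × (Fin n → Matrix (Fin 2) (Fin 2) ℂ)

/-- `su(2)`: traceless skew-Hermitian `2 × 2` complex matrices, as a real subspace. -/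
def su2 : Submodule ℝ (Matrix (Fin 2) (Fin 2) ℂ) where
  carrier := {X | Xᴴ = -X ∧ X.trace = 0}
  add_mem' := by
    rintro X Y ⟨hX1, hX2⟩ ⟨hY1, hY2⟩
    exact ⟨by rw [Matrix.conjTranspose_add, hX1, hY1, neg_add],
           by rw [Matrix.trace_add, hX2, hY2, add_zero]⟩
  zero_mem' := ⟨by simp, by simp⟩
  smul_mem' := by
    rintro r X ⟨hX1, hX2⟩
    exact ⟨by rw [Matrix.conjTranspose_smul, hX1, star_trivial, smul_neg],
           by rw [Matrix.trace_smul, hX2, smul_zero]⟩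

/-- The Lie algebra `g = u(1) ⊕ su(2)^n` as a real subspace of `GV n`. -/
def gSub (n : ℕ) : Submodule ℝ (GV n) :=
  (⊤ : Submodule ℝ ℝ).prod (Submodule.pi Set.univ fun _ => su2)

/-- `g_S`: elements `(0, X)` of `g` with `X j = 0` for `j ∉ S`. -/
def gS {n : ℕ} (S : Set (Fin n)) : Submodule ℝ (GV n) :=
  (⊥ : Submodule ℝ ℝ).prod (Submodule.pi Set.univ fun j =>
    letI := Classical.dec (j ∈ S)
    if j ∈ S then su2 else ⊥)

/-- `ḡ_S`: elements `(t, X)` of `g` with `X j = 0` for `j ∈ S`. -/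
def gBar {n : ℕ} (S : Set (Fin n)) : Submodule ℝ (GV n) :=
  (⊤ : Submodule ℝ ℝ).prod (Submodule.pi Set.univ fun j =>
    letI := Classical.dec (j ∈ S)
    if j ∈ S then (⊥ : Submodule ℝ (Matrix (Fin 2) (Fin 2) ℂ)) else su2)

/-- The projection `P_j : g → su(2)`, `(t, X) ↦ X j`. -/
def Pj {n : ℕ} (j : Fin n) : GV n →ₗ[ℝ] Matrix (Fin 2) (Fin 2) ℂ :=
  (LinearMap.proj j).comp (LinearMap.snd ℝ ℝ (Fin n → Matrix (Fin 2) (Fin 2) ℂ))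

/-- Apply the matrix `X` to qubit `j` of the state `ψ`. -/
def applySingle {n : ℕ} (j : Fin n) (X : Matrix (Fin 2) (Fin 2) ℂ) (ψ : QState n) : QState n :=
  fun I => ∑ k : Fin 2, X (I j) k * ψ (Function.update I j k)

/-- The infinitesimal local-unitary action: `dΦ_ψ(t, X) = i t ψ + Σ_j X_j ψ`. -/
def dPhi {n : ℕ} (ψ : QState n) : GV n →ₗ[ℝ] QState n where
  toFun x := fun I => Complex.I * (x.1 : ℂ) * ψ I + ∑ j, applySingle j (x.2 j) ψ I
  map_add' x y := by
    funext I
    simp only [applySingle, Prod.fst_add, Prod.snd_add, Pi.add_apply, Matrix.add_apply,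
      Complex.ofReal_add, add_mul, Finset.sum_add_distrib]
    ring
  map_smul' r x := by
    funext I
    simp only [applySingle, Prod.smul_fst, Prod.smul_snd, Pi.smul_apply, Matrix.smul_apply,
      smul_eq_mul, Complex.real_smul, Complex.ofReal_mul, RingHom.id_apply,
      Finset.mul_sum, mul_add]
    congr 1
    · ring
    · refine Finset.sum_congr rfl fun j _ => Finset.sum_congr rfl fun k _ => by ring

/-- The stabilizer subalgebra `K_ψ = {(t,X) ∈ g : dΦ_ψ(t,X) = 0}`. -/
def stab {n : ℕ} (ψ : QState n) : Submodule ℝ (GV n) :=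
  gSub n ⊓ LinearMap.ker (dPhi ψ)

/-- The componentwise bracket on `g` (zero in the `u(1)` component). -/
def gBracket {n : ℕ} (x y : GV n) : GV n :=
  (0, fun j => ⁅x.2 j, y.2 j⁆)

/-- An `su(2)` block for `ψ`: a set `S` of qubits with `dim (K_ψ ∩ g_S) > 1` and
`dim (K_ψ ∩ g_{S'}) = 0` for every proper subset `S' ⊊ S`. -/
def Su2Block {n : ℕ} (ψ : QState n) (S : Set (Fin n)) : Prop :=
  1 < Module.finrank ℝ ↥(stab ψ ⊓ gS S) ∧
  ∀ S' : Set (Fin n), S' ⊂ S → Module.finrank ℝ ↥(stab ψ ⊓ gS S') = 0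

/-- The union `B` of all `su(2)` blocks for `ψ`. -/
def blockUnion {n : ℕ} (ψ : QState n) : Set (Fin n) :=
  {q | ∃ S : Set (Fin n), Su2Block ψ S ∧ q ∈ S}

/-- The number `p` of `su(2)` blocks for `ψ`. -/
def blockCount {n : ℕ} (ψ : QState n) : ℕ :=
  {S : Set (Fin n) | Su2Block ψ S}.ncard

/-- `ψ` factors across the set `S` of qubits: `ψ(I) = φ(I|_S) · χ(I|_{Sᶜ})`. -/
def FactorsAcross {n : ℕ} (ψ : QState n) (S : Set (Fin n)) : Prop :=
  ∃ (φ : (↥S → Fin 2) → ℂ) (χ : (↥(Sᶜ) → Fin 2) → ℂ),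
    ∀ I : Fin n → Fin 2, ψ I = φ (fun j => I j.1) * χ (fun j => I j.1)

/-- `ψ` is a nonproduct state: it factors across no proper nonempty set of qubits. -/
def IsNonproduct {n : ℕ} (ψ : QState n) : Prop :=
  ∀ S : Set (Fin n), S ≠ ∅ → S ≠ Set.univ → ¬ FactorsAcross ψ S

/-- `ψ` has a single-qubit factor. -/
def HasSingleQubitFactor {n : ℕ} (ψ : QState n) : Prop :=
  ∃ j : Fin n, FactorsAcross ψ {j}

/-- Apply the local unitary (or just local linear) transformation `⊗_j U_j` to `ψ`. -/
def luApply {n : ℕ} (U : Fin n → Matrix (Fin 2) (Fin 2) ℂ) (ψ : QState n) : QState n :=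
  fun I => ∑ J : Fin n → Fin 2, (∏ j, U j (I j) (J j)) * ψ J

/-- Local unitary equivalence of `n`-qubit states. -/
def LUEquiv {n : ℕ} (ψ ψ' : QState n) : Prop :=
  ∃ U : Fin n → Matrix (Fin 2) (Fin 2) ℂ,
    (∀ j, U j ∈ Matrix.unitaryGroup (Fin 2) ℂ) ∧ ψ' = luApply U ψ

/-- The two-qubit singlet state `φ(a,b) = δ_{a0} δ_{b1} − δ_{a1} δ_{b0}`. -/
def singletFn : Fin 2 → Fin 2 → ℂ := fun a b =>
  if a = 0 ∧ b = 1 then 1 else if a = 1 ∧ b = 0 then -1 else 0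

/-- `ψ` has a singlet factor: it is LU-equivalent to a state that factors across a
two-element set of qubits, with the two-qubit factor being the singlet. -/
def HasSingletFactor {n : ℕ} (ψ : QState n) : Prop :=
  ∃ ψ' : QState n, LUEquiv ψ ψ' ∧ ∃ j k : Fin n, j ≠ k ∧
    ∃ χ : (↥(({j, k} : Set (Fin n))ᶜ) → Fin 2) → ℂ,
      ∀ I : Fin n → Fin 2, ψ' I = singletFn (I j) (I k) * χ (fun q => I q.1)

/-- The matrix `A = diag(i, −i) ∈ su(2)`. -/
def matA : Matrix (Fin 2) (Fin 2) ℂ := !![Complex.I, 0; 0, -Complex.I]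

/-- The generalized `n`-qubit GHZ state `α|0…0⟩ + β|1…1⟩`. -/
def ghz (n : ℕ) (α β : ℂ) : QState n := fun I =>
  if ∀ j, I j = 0 then α else if ∀ j, I j = 1 then β else 0
/-!
Minimality of the block `S` makes every projection `P_j`, `j ∈ S`, injective on
`K = K_ψ ∩ g_S`, and `K` is closed under the componentwise bracket. As `dim K ≥ 2` and `su(2)`
has rank one, there are `x, e ∈ K` with `f = [x, e] ≠ 0`. On traceless `2 × 2` matrices
`ad_X³ = -4 det X • ad_X`, so `[x, [x, f]]` is `f` rescaled in slot `j` by `-4 det x_j`; since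
`[x, [x, f]] ∈ K`, injectivity of the `P_j` forces these factors to coincide. Thus `x_j² = d • 1`
for one `d ≠ 0` and all `j ∈ S`; after rescaling, `Σ_{j ∈ S} x_j` is a sum of commuting
involutions annihilating `ψ`, and such a sum only has the eigenvalues `|S| - 2m`.
-/

namespace Matrix

variable {R : Type*} [CommRing R]

theorem mul_self_of_trace_eq_zero {X : Matrix (Fin 2) (Fin 2) R} (hX : X.trace = 0) :
    X * X = (-X.det) • 1 := by
  have h11 : X 1 1 = -X 0 0 := by rw [trace_fin_two] at hX; linear_combination hX
  ext i j
  fin_cases i <;> fin_cases j <;> simp [mul_apply, det_fin_two, h11] <;> ring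

theorem anticomm_of_trace_eq_zero {X Y : Matrix (Fin 2) (Fin 2) R} (hX : X.trace = 0)
    (hY : Y.trace = 0) : X * Y + Y * X = (X * Y).trace • 1 := by
  have hX11 : X 1 1 = -X 0 0 := by rw [trace_fin_two] at hX; linear_combination hX
  have hY11 : Y 1 1 = -Y 0 0 := by rw [trace_fin_two] at hY; linear_combination hY
  ext i j
  fin_cases i <;> fin_cases j <;> simp [mul_apply, trace_fin_two, hX11, hY11] <;> ring

theorem lie_lie_lie_of_trace_eq_zero {X : Matrix (Fin 2) (Fin 2) R} (hX : X.trace = 0)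
    (E : Matrix (Fin 2) (Fin 2) R) : ⁅X, ⁅X, ⁅X, E⁆⁆⁆ = (-4 * X.det) • ⁅X, E⁆ := by
  have h11 : X 1 1 = -X 0 0 := by rw [trace_fin_two] at hX; linear_combination hX
  ext i j
  fin_cases i <;> fin_cases j <;>
    simp [Ring.lie_def, mul_apply, det_fin_two, h11] <;> ring

end Matrix

namespace su2

variable {X Y : Matrix (Fin 2) (Fin 2) ℂ}

theorem lie_mem (hX : X ∈ su2) (hY : Y ∈ su2) : ⁅X, Y⁆ ∈ su2 := by
  refine ⟨?_, by rw [Ring.lie_def, Matrix.trace_sub, Matrix.trace_mul_comm, sub_self]⟩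
  rw [Ring.lie_def, Matrix.conjTranspose_sub, Matrix.conjTranspose_mul, Matrix.conjTranspose_mul,
    hX.1, hY.1, neg_mul_neg, neg_mul_neg, neg_sub]

theorem star_smul_eq {c : ℂ} (hX : X ∈ su2) (hcX : c • X ∈ su2) : star c • X = c • X := by
  have h := hcX.1
  rwa [Matrix.conjTranspose_smul, hX.1, smul_neg, neg_inj] at h

theorem ofReal_re_eq_of_smul_mem {c : ℂ} (hX : X ∈ su2) (hX0 : X ≠ 0) (hcX : c • X ∈ su2) :
    (c.re : ℂ) = c := by
  have h : (star c - c) • X = 0 := by rw [sub_smul, star_smul_eq hX hcX, sub_self]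
  exact Complex.conj_eq_iff_re.mp (sub_eq_zero.mp ((smul_eq_zero.mp h).resolve_right hX0))

theorem star_det (hX : X ∈ su2) : star X.det = X.det := by
  rw [← Matrix.det_conjTranspose, hX.1, Matrix.det_neg]
  simp

theorem ofReal_re_det (hX : X ∈ su2) : ((X.det.re : ℝ) : ℂ) = X.det :=
  Complex.conj_eq_iff_re.mp (star_det hX)

open scoped ComplexOrder in
theorem eq_zero_of_mul_self_eq_zero (hX : X ∈ su2) (h : X * X = 0) : X = 0 := by
  rw [← Matrix.conjTranspose_mul_self_eq_zero, hX.1, neg_mul, h, neg_zero]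

theorem det_ne_zero (hX : X ∈ su2) (hX0 : X ≠ 0) : X.det ≠ 0 := fun h =>
  hX0 <| eq_zero_of_mul_self_eq_zero hX <| by
    rw [Matrix.mul_self_of_trace_eq_zero hX.2, h, neg_zero, zero_smul]

theorem exists_eq_smul_of_commute (hX : X ∈ su2) (hX0 : X ≠ 0) (hY : Y ∈ su2)
    (hXY : Commute X Y) : ∃ r : ℝ, Y = r • X := by
  set c : ℂ := (X * Y).trace / (2 * -X.det)
  have hdet : (2 : ℂ) * -X.det ≠ 0 := by simp [det_ne_zero hX hX0]
  have hYc : Y = c • X := by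
    have h : ((2 : ℂ) * -X.det) • Y = (X * Y).trace • X := by
      calc ((2 : ℂ) * -X.det) • Y = (2 : ℂ) • ((X * X) * Y) := by
            rw [Matrix.mul_self_of_trace_eq_zero hX.2, Matrix.smul_mul, Matrix.one_mul,
              smul_smul]
        _ = X * (X * Y + Y * X) := by
            rw [← hXY.eq, ← two_smul ℂ (X * Y), Matrix.mul_smul, Matrix.mul_assoc]
        _ = (X * Y).trace • X := by
            rw [Matrix.anticomm_of_trace_eq_zero hX.2 hY.2, Matrix.mul_smul, Matrix.mul_one]
    rw [← inv_smul_smul₀ hdet Y, h, smul_smul, inv_mul_eq_div]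
  refine ⟨c.re, ?_⟩
  rw [← Complex.coe_smul, ofReal_re_eq_of_smul_mem hX hX0 (hYc ▸ hY), hYc]

end su2

namespace QState

variable {n : ℕ}

def qubitOp (j : Fin n) : Matrix (Fin 2) (Fin 2) ℂ →ₐ[ℂ] Module.End ℂ (QState n) :=
  AlgHom.ofLinearMap
    (LinearMap.mk₂ ℂ (applySingle j)
      (fun X Y ψ => funext fun I => by simp [applySingle, add_mul, Finset.sum_add_distrib])
      (fun c X ψ => funext fun I => by simp [applySingle]; ring)
      (fun X ψ φ => funext fun I => by simp [applySingle, mul_add, Finset.sum_add_distrib])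
      (fun c X ψ => funext fun I => by simp [applySingle]; ring))
    (LinearMap.ext fun ψ => funext fun I => by
      simp [applySingle, Matrix.one_apply, Finset.sum_ite_eq])
    (fun X Y => LinearMap.ext fun ψ => funext fun I => by
      simp only [LinearMap.mk₂_apply, Module.End.mul_apply, applySingle, Function.update_self,
        Function.update_idem, Finset.mul_sum, Matrix.mul_apply, Finset.sum_mul]
      rw [Finset.sum_comm]
      exact Finset.sum_congr rfl fun _ _ => Finset.sum_congr rfl fun _ _ => by ring)

theorem qubitOp_apply (j : Fin n) (X : Matrix (Fin 2) (Fin 2) ℂ) (ψ : QState n) :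
    qubitOp j X ψ = applySingle j X ψ := rfl

theorem commute_qubitOp {j k : Fin n} (h : j ≠ k) (X Y : Matrix (Fin 2) (Fin 2) ℂ) :
    Commute (qubitOp j X) (qubitOp k Y) :=
  LinearMap.ext fun ψ => funext fun I => by
    simp only [Module.End.mul_apply, qubitOp_apply, applySingle, Finset.mul_sum]
    rw [Finset.sum_comm]
    refine Finset.sum_congr rfl fun b _ => Finset.sum_congr rfl fun a _ => ?_
    rw [Function.update_of_ne (Ne.symm h), Function.update_of_ne h, Function.update_comm h]
    ring

def localOp (a : Fin n → Matrix (Fin 2) (Fin 2) ℂ) : Module.End ℂ (QState n) :=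
  ∑ j, qubitOp j (a j)

theorem qubitOp_lie (j : Fin n) (X Y : Matrix (Fin 2) (Fin 2) ℂ) :
    qubitOp j ⁅X, Y⁆ = ⁅qubitOp j X, qubitOp j Y⁆ := by
  rw [Ring.lie_def, Ring.lie_def, map_sub, map_mul, map_mul]

theorem localOp_lie (a b : Fin n → Matrix (Fin 2) (Fin 2) ℂ) :
    localOp (fun j => ⁅a j, b j⁆) = ⁅localOp a, localOp b⁆ := by
  have hcross : ∀ j k, j ≠ k → qubitOp j (a j) * qubitOp k (b k) =
      qubitOp k (b k) * qubitOp j (a j) := fun j k h => commute_qubitOp h _ _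
  rw [Ring.lie_def, localOp, localOp, localOp, Finset.sum_mul_sum, Finset.sum_mul_sum,
    Finset.sum_comm (f := fun k j => qubitOp k (b k) * qubitOp j (a j)),
    ← Finset.sum_sub_distrib]
  refine Finset.sum_congr rfl fun j _ => ?_
  rw [← Finset.sum_sub_distrib, Finset.sum_eq_single j (fun k _ hkj => by
    rw [hcross j k hkj.symm, sub_self]) (by simp), qubitOp_lie, Ring.lie_def]

theorem dPhi_zero_mk (ψ : QState n) (a : Fin n → Matrix (Fin 2) (Fin 2) ℂ) :
    dPhi ψ (0, a) = localOp a ψ := by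
  funext I
  simp [dPhi, localOp, qubitOp_apply, Finset.sum_apply]

end QState

namespace Module.End

variable {K V : Type*} [Field K] [AddCommGroup V] [Module K V]

theorem HasEigenvalue.sub_one_or_add_one_of_involution [NeZero (2 : K)] {A L : End K V}
    {c : K} (hA : A * A = 1) (hAL : Commute A L) (h : (A + L).HasEigenvalue c) :
    L.HasEigenvalue (c - 1) ∨ L.HasEigenvalue (c + 1) := by
  obtain ⟨v, hv, hv0⟩ := h.exists_hasEigenvector
  have hLv : L v = c • v - A v := by
    rw [mem_eigenspace_iff, LinearMap.add_apply] at hv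
    rw [← hv, add_sub_cancel_left]
  have hLAv : L (A v) = c • A v - v := by
    rw [← mul_apply, ← hAL.eq, mul_apply, hLv, map_sub, map_smul, ← mul_apply A A, hA, one_apply]
  by_cases hplus : v + A v = 0
  · refine Or.inr (hasEigenvalue_of_hasEigenvector (x := v - A v)
      ⟨mem_eigenspace_iff.mpr ?_, fun hminus => ?_⟩)
    · rw [map_sub, hLv, hLAv]
      module
    · refine hv0 (smul_right_injective V (NeZero.ne (2 : K)) ?_)
      linear_combination (norm := module) hplus + hminus
  · refine Or.inl (hasEigenvalue_of_hasEigenvector (x := v + A v)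
      ⟨mem_eigenspace_iff.mpr ?_, hplus⟩)
    rw [map_add, hLv, hLAv]
    module

theorem HasEigenvalue.exists_eq_card_sub_two_mul [NeZero (2 : K)] {ι : Type*}
    (T : Finset ι) (A : ι → End K V) (hA : ∀ i ∈ T, A i * A i = 1)
    (hcomm : ∀ i ∈ T, ∀ j ∈ T, Commute (A i) (A j)) {c : K}
    (h : (∑ i ∈ T, A i).HasEigenvalue c) : ∃ m ≤ T.card, c = T.card - 2 * m := by
  classical
  induction T using Finset.induction_on generalizing c with
  | empty =>
    obtain ⟨v, hv, hv0⟩ := h.exists_hasEigenvector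
    rw [Finset.sum_empty, mem_eigenspace_iff, LinearMap.zero_apply, eq_comm,
      smul_eq_zero] at hv
    exact ⟨0, le_rfl, by simpa using hv.resolve_right hv0⟩
  | @insert j T hj ih =>
    have hAT := fun i hi => hA i (Finset.mem_insert_of_mem hi)
    have hcommT := fun i hi k hk =>
      hcomm i (Finset.mem_insert_of_mem hi) k (Finset.mem_insert_of_mem hk)
    have hjT : Commute (A j) (∑ i ∈ T, A i) :=
      Commute.sum_right _ _ _ fun i hi => hcomm j (Finset.mem_insert_self j T) i
        (Finset.mem_insert_of_mem hi)
    rw [Finset.sum_insert hj] at h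
    rw [Finset.card_insert_of_notMem hj]
    rcases h.sub_one_or_add_one_of_involution (hA j (Finset.mem_insert_self j T)) hjT with
      h' | h'
    · obtain ⟨m, hm, hc⟩ := ih hAT hcommT h'
      exact ⟨m, by omega, by push_cast; linear_combination hc⟩
    · obtain ⟨m, hm, hc⟩ := ih hAT hcommT h'
      exact ⟨m + 1, by omega, by push_cast; linear_combination hc⟩

end Module.End

section Stabilizer

open QState

variable {n : ℕ} {ψ : QState n} {S : Set (Fin n)} {x y : GV n}

theorem mem_stab_inf_gS :
    x ∈ stab ψ ⊓ gS S ↔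
      x.1 = 0 ∧ (∀ j, x.2 j ∈ su2) ∧ (∀ j ∉ S, x.2 j = 0) ∧ localOp x.2 ψ = 0 := by
  obtain ⟨t, a⟩ := x
  simp only [stab, gS, gSub, Submodule.mem_inf, Submodule.mem_prod, Submodule.mem_pi,
    LinearMap.mem_ker, Submodule.mem_bot, Submodule.mem_top, Set.mem_univ, true_implies,
    true_and]
  constructor
  · rintro ⟨⟨hsu, hker⟩, rfl, hS⟩
    exact ⟨rfl, hsu, fun j hj => by simpa [hj] using hS j, by rwa [dPhi_zero_mk] at hker⟩
  · rintro ⟨rfl, hsu, hoff, hloc⟩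
    refine ⟨⟨hsu, by rwa [dPhi_zero_mk]⟩, rfl, fun j => ?_⟩
    by_cases hj : j ∈ S <;> simp [hj, hsu j, hoff j]

theorem gBracket_mem_stab_inf_gS (hx : x ∈ stab ψ ⊓ gS S) (hy : y ∈ stab ψ ⊓ gS S) :
    gBracket x y ∈ stab ψ ⊓ gS S := by
  rw [mem_stab_inf_gS] at *
  refine ⟨rfl, fun j => su2.lie_mem (hx.2.1 j) (hy.2.1 j), fun j hj => ?_, ?_⟩
  · simp [gBracket, hx.2.2.1 j hj, Ring.lie_def]
  · rw [gBracket, localOp_lie, Ring.lie_def, LinearMap.sub_apply, Module.End.mul_apply,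
      Module.End.mul_apply, hx.2.2.2, hy.2.2.2, map_zero, map_zero, sub_zero]

theorem exists_snd_ne_zero_of_mem_stab_inf_gS (hx : x ∈ stab ψ ⊓ gS S) (hx0 : x ≠ 0) :
    ∃ j ∈ S, x.2 j ≠ 0 := by
  rw [mem_stab_inf_gS] at hx
  by_contra! h
  refine hx0 (Prod.ext hx.1 (funext fun j => ?_))
  by_cases hj : j ∈ S
  exacts [h j hj, hx.2.2.1 j hj]

namespace Su2Block

theorem eq_zero_of_snd_eq_zero (hS : Su2Block ψ S) (hx : x ∈ stab ψ ⊓ gS S) {j : Fin n}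
    (hj : j ∈ S) (hxj : x.2 j = 0) : x = 0 := by
  have hbot : stab ψ ⊓ gS (S \ {j}) = ⊥ :=
    Submodule.finrank_eq_zero.mp (hS.2 _ (Set.sdiff_singleton_ssubset.mpr hj))
  rw [← Submodule.mem_bot ℝ, ← hbot, mem_stab_inf_gS]
  rw [mem_stab_inf_gS] at hx
  refine ⟨hx.1, hx.2.1, fun k hk => ?_, hx.2.2.2⟩
  by_cases hkj : k = j
  · rwa [hkj]
  · exact hx.2.2.1 k fun hkS => hk ⟨hkS, hkj⟩

variable {e : GV n}

theorem exists_gBracket_ne_zero (hS : Su2Block ψ S) :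
    ∃ x ∈ stab ψ ⊓ gS S, ∃ e ∈ stab ψ ⊓ gS S, gBracket x e ≠ 0 := by
  obtain ⟨x, hx0⟩ := Module.finrank_pos_iff_exists_ne_zero.mp (zero_lt_one.trans hS.1)
  obtain ⟨e, hxe⟩ := exists_linearIndependent_pair_of_one_lt_finrank hS.1 hx0
  refine ⟨x, x.2, e, e.2, fun hbr => ?_⟩
  have hx := mem_stab_inf_gS.mp x.2
  have he := mem_stab_inf_gS.mp e.2
  obtain ⟨j, hj, hxj⟩ := exists_snd_ne_zero_of_mem_stab_inf_gS x.2 (by simpa using hx0)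
  have hcomm : Commute (x.1.2 j) (e.1.2 j) := by
    have hlie : ⁅x.1.2 j, e.1.2 j⁆ = 0 := congrFun (congrArg Prod.snd hbr) j
    rwa [Ring.lie_def, sub_eq_zero] at hlie
  obtain ⟨r, hr⟩ := su2.exists_eq_smul_of_commute (hx.2.1 j) hxj (he.2.1 j) hcomm
  refine (LinearIndependent.pair_iff' hx0).mp hxe r (Subtype.ext ?_)
  refine (sub_eq_zero.mp (hS.eq_zero_of_snd_eq_zero (Submodule.sub_mem _ e.2
    (Submodule.smul_mem _ r x.2)) hj ?_)).symm
  simp [hr]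

theorem det_eq_of_gBracket_ne_zero (hS : Su2Block ψ S) (hx : x ∈ stab ψ ⊓ gS S)
    (he : e ∈ stab ψ ⊓ gS S) (hxe : gBracket x e ≠ 0) {i j : Fin n} (hi : i ∈ S) (hj : j ∈ S) :
    (x.2 i).det = (x.2 j).det := by
  set f := gBracket x e
  have hf : f ∈ stab ψ ⊓ gS S := gBracket_mem_stab_inf_gS hx he
  have hg := gBracket_mem_stab_inf_gS hx (gBracket_mem_stab_inf_gS hx hf)
  have hsu := (mem_stab_inf_gS.mp hx).2.1
  have key : ∀ k ∈ S, gBracket x (gBracket x f) = (-4 * (x.2 k).det.re) • f := by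
    intro k hk
    refine sub_eq_zero.mp (hS.eq_zero_of_snd_eq_zero
      (Submodule.sub_mem _ hg (Submodule.smul_mem _ _ hf)) hk ?_)
    simp only [f, gBracket, Prod.snd_sub, Prod.smul_snd, Pi.sub_apply, Pi.smul_apply]
    rw [Matrix.lie_lie_lie_of_trace_eq_zero (hsu k).2, ← Complex.coe_smul, Complex.ofReal_mul,
      su2.ofReal_re_det (hsu k), Complex.ofReal_neg, Complex.ofReal_ofNat, sub_self]
  have hre := smul_left_injective ℝ hxe ((key i hi).symm.trans (key j hj))
  rw [← su2.ofReal_re_det (hsu i), ← su2.ofReal_re_det (hsu j),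
    mul_right_injective₀ (by norm_num) hre]

theorem exists_mul_self_eq_smul_one (hS : Su2Block ψ S) :
    ∃ x ∈ stab ψ ⊓ gS S, ∃ d : ℂ, d ≠ 0 ∧ ∀ j ∈ S, x.2 j * x.2 j = d • 1 := by
  obtain ⟨x, hx, e, he, hxe⟩ := hS.exists_gBracket_ne_zero
  have hx0 : x ≠ 0 := by
    rintro rfl
    exact hxe (by simp [gBracket, Ring.lie_def]; rfl)
  have hsu := (mem_stab_inf_gS.mp hx).2.1
  obtain ⟨i, hi, hxi⟩ := exists_snd_ne_zero_of_mem_stab_inf_gS hx hx0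
  refine ⟨x, hx, -(x.2 i).det, neg_ne_zero.mpr (su2.det_ne_zero (hsu i) hxi), fun j hj => ?_⟩
  rw [Matrix.mul_self_of_trace_eq_zero (hsu j).2, hS.det_eq_of_gBracket_ne_zero hx he hxe hj hi]

end Su2Block

end Stabilizer

theorem stmt7_general {n : ℕ} (ψ : QState n) (hψ : ψ ≠ 0)
    (S : Set (Fin n)) (hS : Su2Block ψ S) : Even S.ncard := by
  classical
  obtain ⟨x, hx, d, hd, hsq⟩ := hS.exists_mul_self_eq_smul_one
  obtain ⟨z, rfl⟩ := IsAlgClosed.exists_eq_mul_self d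
  have hz : z ≠ 0 := by rintro rfl; simp at hd
  obtain ⟨-, -, hoff, hloc⟩ := mem_stab_inf_gS.mp hx
  set T := S.toFinset
  set A : Fin n → Module.End ℂ (QState n) := fun j => QState.qubitOp j (z⁻¹ • x.2 j)
  have hA : ∀ j ∈ T, A j * A j = 1 := fun j hj => by
    rw [← map_mul, smul_mul_smul, hsq j (Set.mem_toFinset.mp hj), smul_smul,
      show z⁻¹ * z⁻¹ * (z * z) = 1 by field_simp, one_smul, map_one]
  have hcomm : ∀ i ∈ T, ∀ j ∈ T, Commute (A i) (A j) := fun i _ j _ => by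
    rcases eq_or_ne i j with rfl | hij
    exacts [Commute.refl _, QState.commute_qubitOp hij _ _]
  have hsum : ∑ j ∈ T, A j = z⁻¹ • QState.localOp x.2 := by
    rw [QState.localOp, Finset.smul_sum, ← Finset.sum_subset T.subset_univ fun j _ hj => by
      rw [hoff j (by simpa [T] using hj), map_zero, smul_zero]]
    simp only [A, map_smul]
  have heig : (∑ j ∈ T, A j).HasEigenvalue 0 := Module.End.hasEigenvalue_of_hasEigenvector
    ⟨Module.End.mem_eigenspace_iff.mpr (by rw [hsum, LinearMap.smul_apply, hloc, smul_zero,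
      zero_smul]), hψ⟩
  obtain ⟨m, -, hm⟩ := heig.exists_eq_card_sub_two_mul T A hA hcomm
  rw [Set.ncard_eq_toFinset_card']
  exact ⟨m, by rw [← two_mul]; exact_mod_cast (sub_eq_zero.mp hm.symm)⟩

/-- Every `su(2)` block for `ψ` contains an even number of qubits. -/
theorem stmt7 {n : ℕ} (hn : 1 ≤ n) (ψ : QState n) (hψ : ψ ≠ 0)
    (S : Set (Fin n)) (hS : Su2Block ψ S) : Even S.ncard :=
  stmt7_general ψ hψ S hS
end
end

section
/- Suppose n ≥ 2. There is an su(2) block for ψ containing exactly 2 qubits if and only if ψ has a singlet factor. -/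
open scoped Matrix

noncomputable section

/-!
Fix a pair of qubits `j ≠ k` and read `ψ` as a family of `2 × 2` matrices `Ψ_I`, the amplitudes
of qubits `j`, `k` with the other qubits frozen as in `I`. Then `(0, X at j, Y at k)` stabilizes
`ψ` iff `X Ψ_I + Ψ_I Yᵀ = 0` for all `I`.

For the singlet matrix `J` one has `X J + J Xᵀ = tr X • J`, so every diagonal pair `(X, X)`
stabilizes `J ⊗ χ`, and since `J` is invertible no single-qubit element does: `{j, k}` is a block.

Conversely, minimality of the block gives a stabilizer `(X, Y)` with `X, Y ≠ 0`. Conjugating both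
to positive multiples of `diag(i, -i)` by local unitaries forces every `Ψ_I` to be off-diagonal,
`Ψ_I = [[0, p_I], [q_I, 0]]`. A second stabilizer, independent of `(diag(i, -i), diag(i, -i))`,
forces `p = γ q` with `|γ| = 1`, and `diag(γ̄, -1)` on qubit `j` turns `ψ` into `J ⊗ q`.
-/

open Matrix Function

theorem one_lt_finrank_of_linearIndependent_pair {K V : Type*} [DivisionRing K] [AddCommGroup V]
    [Module K V] {p : Submodule K V} [FiniteDimensional K p] {x y : V} (hx : x ∈ p) (hy : y ∈ p)
    (hxy : LinearIndependent K ![x, y]) : 1 < Module.finrank K p := by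
  have hspan : Submodule.span K (Set.range ![x, y]) ≤ p := by
    rw [Submodule.span_le, Set.range_subset_iff]
    intro i
    fin_cases i
    exacts [hx, hy]
  have := Submodule.finrank_mono hspan
  rw [finrank_span_eq_card hxy, Fintype.card_fin] at this
  omega

theorem exists_unimodular_ratio {ι : Type*} {p q : ι → ℂ} {x y : ℂ} (hxy : x ≠ 0 ∨ y ≠ 0)
    (hpq : ∃ i, p i ≠ 0 ∨ q i ≠ 0) (h1 : ∀ i, x * q i + y * p i = 0)
    (h2 : ∀ i, starRingEnd ℂ x * p i + starRingEnd ℂ y * q i = 0) :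
    ∃ γ : ℂ, starRingEnd ℂ γ * γ = 1 ∧ ∀ i, p i = γ * q i := by
  obtain ⟨i, hi⟩ := hpq
  have hx : x ≠ 0 := by
    rintro rfl
    have hy := hxy.resolve_left (not_not.2 rfl)
    rcases hi with hp | hq
    · exact hp ((mul_eq_zero.1 (by simpa using h1 i)).resolve_left hy)
    · exact hq ((mul_eq_zero.1 (by simpa using h2 i)).resolve_left (by simpa using hy))
  have hy : y ≠ 0 := by
    rintro rfl
    rcases hi with hp | hq
    · exact hp ((mul_eq_zero.1 (by simpa using h2 i)).resolve_left (by simpa using hx))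
    · exact hq ((mul_eq_zero.1 (by simpa using h1 i)).resolve_left hx)
  have hratio : ∀ i, p i = -x / y * q i := fun i => by
    field_simp
    linear_combination h1 i
  have hqi : q i ≠ 0 := fun hq => by simp [hq, hratio i] at hi
  have hnorm : starRingEnd ℂ x * x = starRingEnd ℂ y * y := by
    have h := h2 i
    rw [hratio i] at h
    field_simp at h
    exact (mul_left_cancel₀ hqi (by linear_combination h)).symm
  refine ⟨-x / y, ?_, hratio⟩
  have hy' : starRingEnd ℂ y ≠ 0 := by simpa using hy
  rw [map_div₀, map_neg]
  field_simp
  linear_combination hnorm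

theorem su2_apply_one_one {X : Matrix (Fin 2) (Fin 2) ℂ} (hX : X ∈ su2) : X 1 1 = -X 0 0 := by
  have h := hX.2
  rw [trace_fin_two] at h
  linear_combination h

theorem su2_apply_one_zero {X : Matrix (Fin 2) (Fin 2) ℂ} (hX : X ∈ su2) :
    X 1 0 = -starRingEnd ℂ (X 0 1) := by
  have h := congrFun (congrFun hX.1 1) 0
  simp only [conjTranspose_apply, RCLike.star_def, Matrix.neg_apply] at h
  linear_combination h

theorem su2_eq_smul_matA {X : Matrix (Fin 2) (Fin 2) ℂ} (hX : X ∈ su2) (h01 : X 0 1 = 0) :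
    X = (X 0 0).im • matA := by
  have h00 : (X 0 0).re = 0 := by
    have := congrArg Complex.re (congrFun (congrFun hX.1 0) 0)
    simp only [conjTranspose_apply, RCLike.star_def, Complex.conj_re, Matrix.neg_apply,
      Complex.neg_re] at this
    linarith
  have h10 := su2_apply_one_zero hX
  have h11 := su2_apply_one_one hX
  ext a b
  fin_cases a <;> fin_cases b <;>
    simp [matA, h01, h10, h11, Complex.ext_iff, h00]

theorem su2_conj_mem {U X : Matrix (Fin 2) (Fin 2) ℂ} (hU : U ∈ unitaryGroup (Fin 2) ℂ)
    (hX : X ∈ su2) : U * X * star U ∈ su2 := by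
  refine ⟨?_, ?_⟩
  · have h : (U * X * star U)ᴴ = U * Xᴴ * star U := by
      simp [conjTranspose_mul, star_eq_conjTranspose, Matrix.mul_assoc]
    rw [h, hX.1, Matrix.mul_neg, Matrix.neg_mul]
  · rw [trace_mul_cycle, mem_unitaryGroup_iff'.mp hU, Matrix.one_mul, hX.2]

theorem matA_mem_su2 : matA ∈ su2 := by
  refine ⟨?_, ?_⟩
  · ext a b
    fin_cases a <;> fin_cases b <;> simp [matA, conjTranspose_apply]
  · simp [matA, trace_fin_two]

def singletMat : Matrix (Fin 2) (Fin 2) ℂ := !![0, 1; -1, 0]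

theorem singletFn_eq_singletMat (a b : Fin 2) : singletFn a b = singletMat a b := by
  fin_cases a <;> fin_cases b <;> simp [singletFn, singletMat]

theorem singletMat_mem_su2 : singletMat ∈ su2 := by
  refine ⟨?_, ?_⟩
  · ext a b
    fin_cases a <;> fin_cases b <;> simp [singletMat, conjTranspose_apply]
  · simp [singletMat, trace_fin_two]

theorem mul_singletMat_add_singletMat_mul_transpose (X : Matrix (Fin 2) (Fin 2) ℂ) :
    X * singletMat + singletMat * Xᵀ = X.trace • singletMat := by
  ext a b
  simp only [Matrix.add_apply, mul_apply, Fin.sum_univ_two, transpose_apply, Matrix.smul_apply]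
  fin_cases a <;> fin_cases b <;> simp [singletMat, trace_fin_two]

theorem isUnit_singletMat : IsUnit singletMat := by
  rw [isUnit_iff_isUnit_det]
  simp [singletMat, det_fin_two]

theorem singletMat_mem_unitaryGroup : singletMat ∈ unitaryGroup (Fin 2) ℂ := by
  rw [mem_unitaryGroup_iff']
  ext a b
  fin_cases a <;> fin_cases b <;>
    simp [singletMat, mul_apply, Fin.sum_univ_two, star_eq_conjTranspose, conjTranspose_apply]

theorem star_singletMat_mul_matA_mul_singletMat :
    star singletMat * matA * singletMat = -matA := by
  ext a b
  fin_cases a <;> fin_cases b <;>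
    simp [singletMat, matA, mul_apply, Fin.sum_univ_two, star_eq_conjTranspose,
      conjTranspose_apply]

theorem exists_unitary_conj_eq_smul_matA {X : Matrix (Fin 2) (Fin 2) ℂ} (hX : X ∈ su2)
    (hX0 : X ≠ 0) : ∃ U ∈ unitaryGroup (Fin 2) ℂ, ∃ r : ℝ, 0 < r ∧ star U * X * U = r • matA := by
  -- `-iX` is Hermitian and traceless, so a unitary `V` diagonalizes it as `diag(e, -e)`;
  -- if `e < 0`, composing with `singletMat` swaps the two eigenvalues.
  set H := (-Complex.I) • X with hH_def
  have hXH : X = Complex.I • H := by simp [hH_def, smul_smul]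
  have hH : H.IsHermitian := by
    rw [IsHermitian, hH_def, conjTranspose_smul, hX.1]
    simp
  set V : Matrix (Fin 2) (Fin 2) ℂ := ↑hH.eigenvectorUnitary
  have hdiag : star V * H * V = diagonal (RCLike.ofReal ∘ hH.eigenvalues) := by
    simpa [Unitary.conjStarAlgAut_star_apply] using hH.conjStarAlgAut_star_eigenvectorUnitary
  have htr : hH.eigenvalues 0 + hH.eigenvalues 1 = 0 := by
    have h := hH.trace_eq_sum_eigenvalues
    have htr : H.trace = 0 := by rw [hH_def, trace_smul, hX.2, smul_zero]
    rw [htr, Fin.sum_univ_two] at h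
    simpa using (congrArg Complex.re h).symm
  set e := hH.eigenvalues
  have he1 : e 1 = -e 0 := by linarith
  have he0 : e 0 ≠ 0 := by
    intro h0
    have : e = 0 := by
      ext i
      fin_cases i
      · exact h0
      · simp [he1, h0]
    rw [hH.eigenvalues_eq_zero_iff] at this
    exact hX0 (by rw [hXH, this, smul_zero])
  have hconj : star V * X * V = e 0 • matA := by
    rw [hXH, Matrix.mul_smul, Matrix.smul_mul, hdiag]
    ext a b
    fin_cases a <;> fin_cases b <;> simp [matA, he1, mul_comm]
  rcases he0.lt_or_gt with hneg | hpos
  · refine ⟨V * singletMat, mul_mem hH.eigenvectorUnitary.2 singletMat_mem_unitaryGroup, -e 0,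
      neg_pos.2 hneg, ?_⟩
    calc star (V * singletMat) * X * (V * singletMat)
        = star singletMat * (star V * X * V) * singletMat := by
          simp only [star_mul, Matrix.mul_assoc]
      _ = -e 0 • matA := by
          rw [hconj, Matrix.mul_smul, Matrix.smul_mul, star_singletMat_mul_matA_mul_singletMat,
            smul_neg, neg_smul]
  · exact ⟨V, hH.eigenvectorUnitary.2, e 0, hpos, hconj⟩

section LocalUnitary

variable {n : ℕ}

def luMatrix (U : Fin n → Matrix (Fin 2) (Fin 2) ℂ) :
    Matrix (Fin n → Fin 2) (Fin n → Fin 2) ℂ :=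
  Matrix.of fun I J => ∏ q, U q (I q) (J q)

theorem luApply_eq_mulVec (U : Fin n → Matrix (Fin 2) (Fin 2) ℂ) (ψ : QState n) :
    luApply U ψ = luMatrix U *ᵥ ψ := rfl

theorem luMatrix_mul (U V : Fin n → Matrix (Fin 2) (Fin 2) ℂ) :
    luMatrix (U * V) = luMatrix U * luMatrix V := by
  ext I K
  simp only [luMatrix, of_apply, mul_apply, Pi.mul_apply, ← Finset.prod_mul_distrib]
  rw [Finset.prod_univ_sum, Fintype.piFinset_univ]

theorem luMatrix_one : luMatrix (1 : Fin n → Matrix (Fin 2) (Fin 2) ℂ) = 1 := by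
  ext I J
  change ∏ q, (1 : Matrix (Fin 2) (Fin 2) ℂ) (I q) (J q) = (1 : Matrix _ _ ℂ) I J
  by_cases h : I = J
  · subst h
    rw [one_apply_eq]
    exact Finset.prod_eq_one fun q _ => one_apply_eq _
  · obtain ⟨q, hq⟩ := Function.ne_iff.mp h
    rw [one_apply_ne h]
    exact Finset.prod_eq_zero (Finset.mem_univ q) (one_apply_ne hq)

theorem luApply_luApply (U V : Fin n → Matrix (Fin 2) (Fin 2) ℂ) (ψ : QState n) :
    luApply U (luApply V ψ) = luApply (U * V) ψ := by
  simp [luApply_eq_mulVec, luMatrix_mul, mulVec_mulVec]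

theorem luApply_one (ψ : QState n) : luApply 1 ψ = ψ := by
  simp [luApply_eq_mulVec, luMatrix_one]

theorem luApply_star_luApply {U : Fin n → Matrix (Fin 2) (Fin 2) ℂ}
    (hU : ∀ q, U q ∈ unitaryGroup (Fin 2) ℂ) (ψ : QState n) :
    luApply (star U) (luApply U ψ) = ψ := by
  rw [luApply_luApply, show star U * U = 1 from funext fun q => mem_unitaryGroup_iff'.mp (hU q),
    luApply_one]

theorem luApply_ne_zero {U : Fin n → Matrix (Fin 2) (Fin 2) ℂ}
    (hU : ∀ q, U q ∈ unitaryGroup (Fin 2) ℂ) {ψ : QState n} (hψ : ψ ≠ 0) :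
    luApply U ψ ≠ 0 := by
  intro h
  apply hψ
  rw [← luApply_star_luApply hU ψ, h, luApply_eq_mulVec, mulVec_zero]

theorem luApply_mulSingle (j : Fin n) (M : Matrix (Fin 2) (Fin 2) ℂ) (ψ : QState n) :
    luApply (Pi.mulSingle j M) ψ = applySingle j M ψ := by
  funext I
  symm
  refine Fintype.sum_of_injective (update I j) (update_injective I j) _ _
    ?_ fun c => ?_
  · intro J hJ
    obtain ⟨q, hqj, hq⟩ : ∃ q, q ≠ j ∧ I q ≠ J q := by
      by_contra! h
      exact hJ ⟨J j, funext fun q => by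
        by_cases hq : q = j
        · subst hq; simp
        · rw [update_of_ne hq, h q hq]⟩
    refine mul_eq_zero_of_left (Finset.prod_eq_zero (Finset.mem_univ q) ?_) _
    rw [Pi.mulSingle_eq_of_ne hqj]
    exact one_apply_ne hq
  · rw [← Finset.mul_prod_erase _ _ (Finset.mem_univ j), Pi.mulSingle_eq_same,
      update_self, Finset.prod_eq_one, mul_one]
    intro q hq
    have hqj := Finset.ne_of_mem_erase hq
    rw [Pi.mulSingle_eq_of_ne hqj, update_of_ne hqj, one_apply_eq]

theorem applySingle_luApply {U : Fin n → Matrix (Fin 2) (Fin 2) ℂ} {j : Fin n}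
    (hU : star (U j) * U j = 1) (M : Matrix (Fin 2) (Fin 2) ℂ) (ψ : QState n) :
    applySingle j (U j * M * star (U j)) (luApply U ψ) = luApply U (applySingle j M ψ) := by
  rw [← luApply_mulSingle, ← luApply_mulSingle, luApply_luApply, luApply_luApply]
  congr 1
  funext q
  by_cases hq : q = j
  · subst hq
    simp [Matrix.mul_assoc, hU]
  · simp [Pi.mulSingle_eq_of_ne hq]

theorem dPhi_eq (ψ : QState n) (x : GV n) :
    dPhi ψ x = (Complex.I * x.1) • ψ + ∑ q, applySingle q (x.2 q) ψ := by
  funext I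
  simp [dPhi, Finset.sum_apply, mul_assoc]

def conjLU (U : Fin n → Matrix (Fin 2) (Fin 2) ℂ) : GV n →ₗ[ℝ] GV n where
  toFun x := (x.1, fun q => U q * x.2 q * star (U q))
  map_add' x y := by
    ext <;> simp [Matrix.mul_add, Matrix.add_mul]
  map_smul' r x := by
    ext <;> simp

theorem conjLU_apply (U : Fin n → Matrix (Fin 2) (Fin 2) ℂ) (x : GV n) :
    conjLU U x = (x.1, fun q => U q * x.2 q * star (U q)) := rfl

theorem conjLU_injective {U : Fin n → Matrix (Fin 2) (Fin 2) ℂ}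
    (hU : ∀ q, star (U q) * U q = 1) : Function.Injective (conjLU U) := by
  refine Function.LeftInverse.injective (g := conjLU (star U)) fun x => Prod.ext rfl ?_
  funext q
  simp only [conjLU_apply, Pi.star_apply, star_star]
  calc star (U q) * (U q * x.2 q * star (U q)) * U q
      = (star (U q) * U q) * x.2 q * (star (U q) * U q) := by simp only [Matrix.mul_assoc]
    _ = x.2 q := by rw [hU, Matrix.one_mul, Matrix.mul_one]

theorem dPhi_luApply {U : Fin n → Matrix (Fin 2) (Fin 2) ℂ} (hU : ∀ q, star (U q) * U q = 1)
    (ψ : QState n) (x : GV n) :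
    dPhi (luApply U ψ) (conjLU U x) = luApply U (dPhi ψ x) := by
  have hsingle := fun q => applySingle_luApply (hU q) (x.2 q) ψ
  rw [dPhi_eq, dPhi_eq]
  simp only [conjLU_apply, hsingle]
  simp only [luApply_eq_mulVec, mulVec_add, mulVec_smul, mulVec_sum]

theorem mem_gSub_iff {x : GV n} : x ∈ gSub n ↔ ∀ q, x.2 q ∈ su2 := by
  simp [gSub, Submodule.mem_prod, Submodule.mem_pi]

theorem mem_gS_iff {S : Set (Fin n)} {x : GV n} :
    x ∈ gS S ↔ x.1 = 0 ∧ ∀ q, (q ∈ S → x.2 q ∈ su2) ∧ (q ∉ S → x.2 q = 0) := by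
  simp only [gS, Submodule.mem_prod, Submodule.mem_bot, Submodule.mem_pi, Set.mem_univ,
    true_implies]
  refine and_congr_right fun _ => forall_congr' fun q => ?_
  by_cases hq : q ∈ S <;> simp [hq]

theorem mem_stab_iff {ψ : QState n} {x : GV n} : x ∈ stab ψ ↔ x ∈ gSub n ∧ dPhi ψ x = 0 :=
  Iff.rfl

theorem conjLU_mem_stab {U : Fin n → Matrix (Fin 2) (Fin 2) ℂ}
    (hU : ∀ q, U q ∈ unitaryGroup (Fin 2) ℂ) {ψ : QState n} {x : GV n} (hx : x ∈ stab ψ) :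
    conjLU U x ∈ stab (luApply U ψ) := by
  obtain ⟨hg, hker⟩ := mem_stab_iff.1 hx
  refine mem_stab_iff.2 ⟨mem_gSub_iff.2 fun q => su2_conj_mem (hU q) (mem_gSub_iff.1 hg q), ?_⟩
  rw [dPhi_luApply (fun q => mem_unitaryGroup_iff'.mp (hU q)), hker, luApply_eq_mulVec,
    mulVec_zero]

theorem conjLU_mem_gS {U : Fin n → Matrix (Fin 2) (Fin 2) ℂ}
    (hU : ∀ q, U q ∈ unitaryGroup (Fin 2) ℂ) {S : Set (Fin n)} {x : GV n} (hx : x ∈ gS S) :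
    conjLU U x ∈ gS S := by
  obtain ⟨h1, h2⟩ := mem_gS_iff.1 hx
  refine mem_gS_iff.2 ⟨h1, fun q => ⟨fun hq => su2_conj_mem (hU q) ((h2 q).1 hq), fun hq => ?_⟩⟩
  simp [conjLU_apply, (h2 q).2 hq]

theorem finrank_stab_inf_gS_le_luApply {U : Fin n → Matrix (Fin 2) (Fin 2) ℂ}
    (hU : ∀ q, U q ∈ unitaryGroup (Fin 2) ℂ) (ψ : QState n) (S : Set (Fin n)) :
    Module.finrank ℝ ↥(stab ψ ⊓ gS S) ≤ Module.finrank ℝ ↥(stab (luApply U ψ) ⊓ gS S) := by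
  have hinj := conjLU_injective fun q => mem_unitaryGroup_iff'.mp (hU q)
  rw [(Submodule.equivMapOfInjective _ hinj (stab ψ ⊓ gS S)).finrank_eq]
  refine Submodule.finrank_mono ?_
  rintro _ ⟨x, ⟨hxs, hxg⟩, rfl⟩
  exact ⟨conjLU_mem_stab hU hxs, conjLU_mem_gS hU hxg⟩

theorem finrank_stab_inf_gS_luApply {U : Fin n → Matrix (Fin 2) (Fin 2) ℂ}
    (hU : ∀ q, U q ∈ unitaryGroup (Fin 2) ℂ) (ψ : QState n) (S : Set (Fin n)) :
    Module.finrank ℝ ↥(stab (luApply U ψ) ⊓ gS S) = Module.finrank ℝ ↥(stab ψ ⊓ gS S) := by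
  refine le_antisymm ?_ (finrank_stab_inf_gS_le_luApply hU ψ S)
  have h := finrank_stab_inf_gS_le_luApply (U := star U) (fun q => Unitary.star_mem (hU q))
    (luApply U ψ) S
  rwa [luApply_star_luApply hU] at h

theorem su2Block_luApply_iff {U : Fin n → Matrix (Fin 2) (Fin 2) ℂ}
    (hU : ∀ q, U q ∈ unitaryGroup (Fin 2) ℂ) {ψ : QState n} {S : Set (Fin n)} :
    Su2Block (luApply U ψ) S ↔ Su2Block ψ S := by
  simp only [Su2Block, finrank_stab_inf_gS_luApply hU]

theorem HasSingletFactor.of_luApply {U : Fin n → Matrix (Fin 2) (Fin 2) ℂ}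
    (hU : ∀ q, U q ∈ unitaryGroup (Fin 2) ℂ) {ψ : QState n}
    (h : HasSingletFactor (luApply U ψ)) : HasSingletFactor ψ := by
  obtain ⟨_, ⟨V, hV, rfl⟩, hfac⟩ := h
  exact ⟨_, ⟨V * U, fun q => mul_mem (hV q) (hU q), luApply_luApply V U ψ⟩, hfac⟩

end LocalUnitary

section QubitPair

variable {n : ℕ} {j k : Fin n}

def pairElt (j k : Fin n) (X Y : Matrix (Fin 2) (Fin 2) ℂ) : GV n :=
  (0, Pi.single j X + Pi.single k Y)

def pairSlice (ψ : QState n) (j k : Fin n) (I : Fin n → Fin 2) : Matrix (Fin 2) (Fin 2) ℂ :=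
  Matrix.of fun a b => ψ (update (update I j a) k b)

theorem pairSlice_congr (ψ : QState n) {I I' : Fin n → Fin 2}
    (h : ∀ q, q ≠ j → q ≠ k → I q = I' q) : pairSlice ψ j k I = pairSlice ψ j k I' := by
  ext a b
  simp only [pairSlice, of_apply]
  congr 1
  funext q
  by_cases hk : q = k
  · simp [hk]
  by_cases hj : q = j
  · subst hj
    simp [update_of_ne hk]
  · simp [update_of_ne hk, update_of_ne hj, h q hj hk]

theorem pairSlice_update (ψ : QState n) (I : Fin n → Fin 2) (a b : Fin 2) :
    pairSlice ψ j k (update (update I j a) k b) = pairSlice ψ j k I :=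
  pairSlice_congr ψ fun q hj hk => by simp [update_of_ne hj, update_of_ne hk]

theorem pairSlice_apply_self (ψ : QState n) (I : Fin n → Fin 2) :
    pairSlice ψ j k I (I j) (I k) = ψ I := by
  simp [pairSlice]

theorem applySingle_eq_mul_pairSlice (hjk : j ≠ k) (X : Matrix (Fin 2) (Fin 2) ℂ)
    (ψ : QState n) (I : Fin n → Fin 2) :
    applySingle j X ψ I = (X * pairSlice ψ j k I) (I j) (I k) := by
  simp only [applySingle, mul_apply, pairSlice, of_apply]
  refine Finset.sum_congr rfl fun c _ => ?_
  rw [← update_of_ne hjk.symm c I, update_eq_self]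

theorem applySingle_eq_pairSlice_mul (ψ : QState n) (Y : Matrix (Fin 2) (Fin 2) ℂ)
    (I : Fin n → Fin 2) :
    applySingle k Y ψ I = (pairSlice ψ j k I * Yᵀ) (I j) (I k) := by
  simp only [applySingle, mul_apply, pairSlice, of_apply, transpose_apply, update_eq_self]
  exact Finset.sum_congr rfl fun c _ => mul_comm _ _

theorem dPhi_single (ψ : QState n) (j : Fin n) (X : Matrix (Fin 2) (Fin 2) ℂ) :
    dPhi ψ (0, Pi.single j X) = applySingle j X ψ := by
  rw [dPhi_eq, Finset.sum_eq_single j]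
  · simp
  · intro q _ hq
    funext I
    simp [applySingle, hq]
  · simp

theorem dPhi_pairElt_apply (hjk : j ≠ k) (ψ : QState n) (X Y : Matrix (Fin 2) (Fin 2) ℂ)
    (I : Fin n → Fin 2) :
    dPhi ψ (pairElt j k X Y) I
      = (X * pairSlice ψ j k I + pairSlice ψ j k I * Yᵀ) (I j) (I k) := by
  have h : pairElt j k X Y = ((0 : ℝ), Pi.single j X) + (0, Pi.single k Y) := by
    simp [pairElt]
  rw [h, map_add, dPhi_single, dPhi_single, Pi.add_apply, Matrix.add_apply,
    applySingle_eq_mul_pairSlice hjk, applySingle_eq_pairSlice_mul]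

theorem pairElt_mem_gSub {X Y : Matrix (Fin 2) (Fin 2) ℂ} (hX : X ∈ su2) (hY : Y ∈ su2) :
    pairElt j k X Y ∈ gSub n := by
  refine mem_gSub_iff.2 fun q => su2.add_mem ?_ ?_
  · by_cases h : q = j <;> simp [h, hX, su2.zero_mem]
  · by_cases h : q = k <;> simp [h, hY, su2.zero_mem]

theorem pairElt_mem_stab_iff (hjk : j ≠ k) {ψ : QState n} {X Y : Matrix (Fin 2) (Fin 2) ℂ}
    (hX : X ∈ su2) (hY : Y ∈ su2) :
    pairElt j k X Y ∈ stab ψ ↔ ∀ I, X * pairSlice ψ j k I + pairSlice ψ j k I * Yᵀ = 0 := by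
  rw [mem_stab_iff, and_iff_right (pairElt_mem_gSub hX hY)]
  constructor
  · intro h I
    ext a b
    have := congrFun h (update (update I j a) k b)
    rwa [dPhi_pairElt_apply hjk, pairSlice_update, update_of_ne hjk, update_self, update_self,
      Pi.zero_apply] at this
  · intro h
    funext I
    rw [dPhi_pairElt_apply hjk, h]
    rfl

theorem conjLU_pairElt (hjk : j ≠ k) (U : Fin n → Matrix (Fin 2) (Fin 2) ℂ)
    (X Y : Matrix (Fin 2) (Fin 2) ℂ) :
    conjLU U (pairElt j k X Y) = pairElt j k (U j * X * star (U j)) (U k * Y * star (U k)) := by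
  refine Prod.ext rfl (funext fun q => ?_)
  by_cases hqj : q = j
  · subst hqj
    simp [conjLU_apply, pairElt, hjk]
  by_cases hqk : q = k
  · subst hqk
    simp [conjLU_apply, pairElt, hqj]
  · simp [conjLU_apply, pairElt, hqj, hqk]

theorem gS_mono {S T : Set (Fin n)} (hST : S ⊆ T) : gS S ≤ gS T := by
  intro x hx
  obtain ⟨h1, h2⟩ := mem_gS_iff.1 hx
  refine mem_gS_iff.2 ⟨h1, fun q => ⟨fun _ => ?_, fun hq => (h2 q).2 fun hqS => hq (hST hqS)⟩⟩
  by_cases hqS : q ∈ S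
  · exact (h2 q).1 hqS
  · rw [(h2 q).2 hqS]
    exact su2.zero_mem

theorem mem_gS_diff_singleton {S : Set (Fin n)} {x : GV n} (hx : x ∈ gS S) {b : Fin n}
    (hb : x.2 b = 0) : x ∈ gS (S \ {b}) := by
  obtain ⟨h1, h2⟩ := mem_gS_iff.1 hx
  refine mem_gS_iff.2 ⟨h1, fun q => ⟨fun hq => (h2 q).1 hq.1, fun hq => ?_⟩⟩
  by_cases hqb : q = b
  · rwa [hqb]
  · exact (h2 q).2 fun hqS => hq ⟨hqS, hqb⟩

theorem pairElt_mem_gS {X Y : Matrix (Fin 2) (Fin 2) ℂ} (hX : X ∈ su2) (hY : Y ∈ su2) :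
    pairElt j k X Y ∈ gS {j, k} := by
  refine mem_gS_iff.2 ⟨rfl, fun q => ⟨fun _ => mem_gSub_iff.1 (pairElt_mem_gSub hX hY) q,
    fun hq => ?_⟩⟩
  simp only [Set.mem_insert_iff, Set.mem_singleton_iff, not_or] at hq
  simp [pairElt, hq.1, hq.2]

theorem eq_pairElt_of_mem_gS (hjk : j ≠ k) {x : GV n} (hx : x ∈ gS {j, k}) :
    x = pairElt j k (x.2 j) (x.2 k) := by
  obtain ⟨h1, h2⟩ := mem_gS_iff.1 hx
  refine Prod.ext h1 (funext fun q => ?_)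
  by_cases hqj : q = j
  · subst hqj
    simp [pairElt, hjk]
  by_cases hqk : q = k
  · subst hqk
    simp [pairElt, hqj]
  · simp [pairElt, hqj, hqk, (h2 q).2 (by simp [hqj, hqk])]

theorem exists_eq_pairElt (hjk : j ≠ k) {x : GV n} (hx : x ∈ gS {j, k}) :
    ∃ X ∈ su2, ∃ Y ∈ su2, x = pairElt j k X Y :=
  ⟨_, ((mem_gS_iff.1 hx).2 j).1 (by simp), _, ((mem_gS_iff.1 hx).2 k).1 (by simp),
    eq_pairElt_of_mem_gS hjk hx⟩

theorem su2Block_pair_iff (hjk : j ≠ k) {ψ : QState n} :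
    Su2Block ψ {j, k} ↔ 1 < Module.finrank ℝ ↥(stab ψ ⊓ gS {j, k}) ∧
      ∀ x ∈ stab ψ ⊓ gS {j, k}, x.2 j = 0 ∨ x.2 k = 0 → x = 0 := by
  refine and_congr_right fun _ => ⟨fun hmin x hx hx0 => ?_, fun hmin S' hS' => ?_⟩
  · obtain ⟨b, hb, hxb⟩ : ∃ b ∈ ({j, k} : Set (Fin n)), x.2 b = 0 := by
      rcases hx0 with h | h
      exacts [⟨j, by simp, h⟩, ⟨k, by simp, h⟩]
    have hbot := Submodule.finrank_eq_zero.1 (hmin _ (Set.sdiff_singleton_ssubset.2 hb))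
    exact (Submodule.mem_bot ℝ).1 (hbot ▸ ⟨hx.1, mem_gS_diff_singleton hx.2 hxb⟩)
  · obtain ⟨b, hb, hbS'⟩ := Set.exists_of_ssubset hS'
    refine Submodule.finrank_eq_zero.2 (eq_bot_iff.2 fun x hx => (Submodule.mem_bot ℝ).2 ?_)
    have hxb : x.2 b = 0 := ((mem_gS_iff.1 hx.2).2 b).2 hbS'
    refine hmin x ⟨hx.1, gS_mono hS'.1 hx.2⟩ ?_
    rcases hb with rfl | rfl
    exacts [Or.inl hxb, Or.inr hxb]

end QubitPair

section SingletToBlock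

variable {n : ℕ} {j k : Fin n}

theorem pairSlice_eq_smul_singletMat (hjk : j ≠ k) {ψ : QState n}
    {χ : (↥(({j, k} : Set (Fin n))ᶜ) → Fin 2) → ℂ}
    (hψ : ∀ I : Fin n → Fin 2, ψ I = singletFn (I j) (I k) * χ (fun q => I q.1))
    (I : Fin n → Fin 2) : pairSlice ψ j k I = χ (fun q => I q.1) • singletMat := by
  ext a b
  have hrest : (fun q : ↥(({j, k} : Set (Fin n))ᶜ) => update (update I j a) k b q.1)
      = fun q => I q.1 := by
    funext q
    have hq := q.2
    simp only [Set.mem_compl_iff, Set.mem_insert_iff, Set.mem_singleton_iff, not_or] at hq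
    rw [update_of_ne hq.2, update_of_ne hq.1]
  rw [pairSlice, of_apply, hψ, hrest, update_self, update_of_ne hjk, update_self,
    singletFn_eq_singletMat, Matrix.smul_apply, smul_eq_mul, mul_comm]

theorem linearIndependent_pairElt_matA_singletMat (hjk : j ≠ k) :
    LinearIndependent ℝ ![pairElt j k matA matA, pairElt j k singletMat singletMat] := by
  refine LinearIndependent.pair_iff.2 fun s t hst => ?_
  have h := congrFun (congrFun (congrArg (fun x : GV n => x.2 j) hst) 0)
  exact ⟨by simpa [pairElt, hjk, matA, singletMat] using h 0,
    by simpa [pairElt, hjk, matA, singletMat] using h 1⟩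

theorem su2Block_of_pairSlice_eq_smul_singletMat (hjk : j ≠ k) {ψ : QState n} (hψ : ψ ≠ 0)
    (hslice : ∀ I, ∃ c : ℂ, pairSlice ψ j k I = c • singletMat) : Su2Block ψ {j, k} := by
  have hdiag : ∀ X ∈ su2, pairElt j k X X ∈ stab ψ ⊓ gS {j, k} := by
    intro X hX
    refine ⟨(pairElt_mem_stab_iff hjk hX hX).2 fun I => ?_, ?_⟩
    · obtain ⟨c, hc⟩ := hslice I
      rw [hc, Matrix.mul_smul, Matrix.smul_mul, ← smul_add,
        mul_singletMat_add_singletMat_mul_transpose, hX.2, zero_smul, smul_zero]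
    · exact pairElt_mem_gS hX hX
  refine (su2Block_pair_iff hjk).2 ⟨?_, fun x hx hx0 => ?_⟩
  · exact one_lt_finrank_of_linearIndependent_pair (hdiag _ matA_mem_su2)
      (hdiag _ singletMat_mem_su2) (linearIndependent_pairElt_matA_singletMat hjk)
  · obtain ⟨I, hI⟩ := Function.ne_iff.mp hψ
    obtain ⟨c, hc⟩ := hslice I
    have hc0 : c ≠ 0 := by
      rintro rfl
      apply hI
      rw [← pairSlice_apply_self ψ I (j := j) (k := k), hc, zero_smul]
      rfl
    obtain ⟨X, hX, Y, hY, rfl⟩ := exists_eq_pairElt hjk hx.2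
    have hker := (pairElt_mem_stab_iff hjk hX hY).1 hx.1 I
    rw [hc, Matrix.mul_smul, Matrix.smul_mul, ← smul_add, smul_eq_zero, or_iff_right hc0] at hker
    have hXY : X = 0 ∧ Y = 0 := by
      rcases hx0 with h | h <;> simp only [pairElt, Pi.add_apply, Pi.single_eq_same,
        Pi.single_eq_of_ne hjk, Pi.single_eq_of_ne hjk.symm, add_zero, zero_add] at h <;> subst h
      · rw [Matrix.zero_mul, zero_add, isUnit_singletMat.mul_right_eq_zero,
          transpose_eq_zero] at hker
        exact ⟨rfl, hker⟩
      · rw [transpose_zero, Matrix.mul_zero, add_zero,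
          isUnit_singletMat.mul_left_eq_zero] at hker
        exact ⟨hker, rfl⟩
    simp [pairElt, hXY]

end SingletToBlock

section BlockToSinglet

variable {n : ℕ} {j k : Fin n}

theorem pairSlice_diag_eq_zero (hjk : j ≠ k) {ψ : QState n} {a b : ℝ} (ha : 0 < a) (hb : 0 < b)
    (h : pairElt j k (a • matA) (b • matA) ∈ stab ψ) (I : Fin n → Fin 2) :
    pairSlice ψ j k I 0 0 = 0 ∧ pairSlice ψ j k I 1 1 = 0 := by
  have hker := (pairElt_mem_stab_iff hjk (su2.smul_mem a matA_mem_su2)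
    (su2.smul_mem b matA_mem_su2)).1 h I
  have h00 := congrFun (congrFun hker 0) 0
  have h11 := congrFun (congrFun hker 1) 1
  simp only [Matrix.add_apply, mul_apply, Fin.sum_univ_two, transpose_apply, Matrix.smul_apply,
    Matrix.zero_apply, matA, of_apply, cons_val', cons_val_zero, cons_val_fin_one, cons_val_one,
    Complex.real_smul, mul_zero, zero_mul, add_zero, zero_add, mul_neg,
    neg_mul] at h00 h11
  have hab : ((a : ℂ) + b) * Complex.I ≠ 0 :=
    mul_ne_zero (by exact_mod_cast (add_pos ha hb).ne') Complex.I_ne_zero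
  exact ⟨mul_left_cancel₀ hab (by linear_combination h00),
    mul_left_cancel₀ hab (by linear_combination -h11)⟩

theorem hasSingletFactor_of_pairSlice (hjk : j ≠ k) {ψ : QState n} {γ : ℂ}
    (hγ : starRingEnd ℂ γ * γ = 1)
    (hdiag : ∀ I, pairSlice ψ j k I 0 0 = 0 ∧ pairSlice ψ j k I 1 1 = 0)
    (hoff : ∀ I, pairSlice ψ j k I 0 1 = γ * pairSlice ψ j k I 1 0) : HasSingletFactor ψ := by
  -- `Z` maps each `[[0, γ q], [q, 0]]` to `q • singletMat`.
  set Z : Matrix (Fin 2) (Fin 2) ℂ := !![starRingEnd ℂ γ, 0; 0, -1]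
  have hZ : Z ∈ unitaryGroup (Fin 2) ℂ := by
    rw [mem_unitaryGroup_iff]
    ext a b
    fin_cases a <;> fin_cases b <;>
      simp [Z, mul_apply, Fin.sum_univ_two, star_eq_conjTranspose, conjTranspose_apply, hγ]
  have hZM : ∀ I, Z * pairSlice ψ j k I = pairSlice ψ j k I 1 0 • singletMat := fun I => by
    ext a b
    fin_cases a <;> fin_cases b <;>
      simp [Z, singletMat, mul_apply, Fin.sum_univ_two, (hdiag I).1, (hdiag I).2, hoff I,
        ← mul_assoc, hγ]
  let extend (c : ↥(({j, k} : Set (Fin n))ᶜ) → Fin 2) : Fin n → Fin 2 :=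
    fun q => if h : q ∈ ({j, k} : Set (Fin n))ᶜ then c ⟨q, h⟩ else 0
  refine ⟨_, ⟨Pi.mulSingle j Z, fun q => ?_, rfl⟩, j, k, hjk,
    fun c => pairSlice ψ j k (extend c) 1 0, fun I => ?_⟩
  · by_cases hq : q = j
    · subst hq
      simpa using hZ
    · simp [hq]
  · have hI : pairSlice ψ j k I = pairSlice ψ j k (extend fun q => I q) :=
      pairSlice_congr ψ fun q hqj hqk => by simp [extend, hqj, hqk]
    rw [luApply_mulSingle, applySingle_eq_mul_pairSlice hjk, hZM, singletFn_eq_singletMat, hI,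
      Matrix.smul_apply, smul_eq_mul, mul_comm]

theorem exists_pairSlice_offDiag_ne_zero {ψ : QState n} (hψ : ψ ≠ 0)
    (hdiag : ∀ I, pairSlice ψ j k I 0 0 = 0 ∧ pairSlice ψ j k I 1 1 = 0) :
    ∃ I, pairSlice ψ j k I 0 1 ≠ 0 ∨ pairSlice ψ j k I 1 0 ≠ 0 := by
  obtain ⟨I, hI⟩ := Function.ne_iff.mp hψ
  refine ⟨I, by_contra fun h => hI ?_⟩
  push Not at h
  rw [Pi.zero_apply, ← pairSlice_apply_self ψ I (j := j) (k := k)]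
  generalize I j = a, I k = b
  fin_cases a <;> fin_cases b
  exacts [(hdiag I).1, h.1, h.2, (hdiag I).2]

theorem hasSingletFactor_or_mem_span_pairElt_matA (hjk : j ≠ k) {ψ : QState n}
    (hdiag : ∀ I, pairSlice ψ j k I 0 0 = 0 ∧ pairSlice ψ j k I 1 1 = 0)
    (hne : ∃ I, pairSlice ψ j k I 0 1 ≠ 0 ∨ pairSlice ψ j k I 1 0 ≠ 0)
    {x : GV n} (hx : x ∈ stab ψ ⊓ gS {j, k}) :
    HasSingletFactor ψ ∨ x ∈ ℝ ∙ pairElt j k matA matA := by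
  obtain ⟨X, hX, Y, hY, rfl⟩ := exists_eq_pairElt hjk hx.2
  have hker := (pairElt_mem_stab_iff hjk hX hY).1 hx.1
  have hentry : ∀ I a b, (X * pairSlice ψ j k I + pairSlice ψ j k I * Yᵀ) a b = 0 :=
    fun I a b => by rw [hker I]; rfl
  simp only [Matrix.add_apply, mul_apply, Fin.sum_univ_two, transpose_apply] at hentry
  by_cases h01 : X 0 1 = 0 ∧ Y 0 1 = 0
  · right
    have h00 : Y 0 0 = X 0 0 := by
      obtain ⟨I, hI⟩ := hne
      have e01 := hentry I 0 1
      have e10 := hentry I 1 0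
      simp only [(hdiag I).1, (hdiag I).2, su2_apply_one_one hX, su2_apply_one_one hY, mul_zero,
        zero_mul, add_zero, zero_add] at e01 e10
      rcases hI with hI | hI
      · exact mul_right_cancel₀ hI (by linear_combination -e01)
      · exact mul_right_cancel₀ hI (by linear_combination e10)
    rw [su2_eq_smul_matA hX h01.1, su2_eq_smul_matA hY h01.2, h00]
    exact Submodule.mem_span_singleton.2
      ⟨(X 0 0).im, by simp [pairElt, smul_add, Pi.single_smul]⟩
  · left
    have e00 := fun I => hentry I 0 0
    have e11 := fun I => hentry I 1 1
    simp only [(hdiag _).1, (hdiag _).2, su2_apply_one_zero hX, su2_apply_one_zero hY, mul_zero,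
      zero_mul, add_zero, zero_add] at e00 e11
    obtain ⟨γ, hγ, hratio⟩ := exists_unimodular_ratio (p := fun I => pairSlice ψ j k I 0 1)
      (q := fun I => pairSlice ψ j k I 1 0) (not_and_or.1 h01) hne
      (fun I => by linear_combination e00 I) (fun I => by linear_combination -e11 I)
    exact hasSingletFactor_of_pairSlice hjk hγ hdiag hratio

theorem hasSingletFactor_of_pairSlice_diag_eq_zero (hjk : j ≠ k) {ψ : QState n} (hψ : ψ ≠ 0)
    (hrank : 1 < Module.finrank ℝ ↥(stab ψ ⊓ gS {j, k}))
    (hdiag : ∀ I, pairSlice ψ j k I 0 0 = 0 ∧ pairSlice ψ j k I 1 1 = 0) :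
    HasSingletFactor ψ := by
  by_contra hS
  have hle : stab ψ ⊓ gS {j, k} ≤ ℝ ∙ pairElt j k matA matA := fun x hx =>
    (hasSingletFactor_or_mem_span_pairElt_matA hjk hdiag
      (exists_pairSlice_offDiag_ne_zero hψ hdiag) hx).resolve_left hS
  have := (Submodule.finrank_mono hle).trans (finrank_span_le_card _)
  simp only [Set.toFinset_singleton, Finset.card_singleton] at this
  omega

theorem hasSingletFactor_of_su2Block (hjk : j ≠ k) {ψ : QState n} (hψ : ψ ≠ 0)
    (hB : Su2Block ψ {j, k}) : HasSingletFactor ψ := by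
  obtain ⟨hrank, hmin⟩ := (su2Block_pair_iff hjk).1 hB
  have hne : stab ψ ⊓ gS {j, k} ≠ ⊥ := fun h => by rw [h, finrank_bot] at hrank; omega
  obtain ⟨x, hx, hx0⟩ := Submodule.exists_mem_ne_zero_of_ne_bot hne
  obtain ⟨X, hX, Y, hY, rfl⟩ := exists_eq_pairElt hjk hx.2
  have hX0 : X ≠ 0 := fun h => hx0 (hmin _ hx (Or.inl (by simp [pairElt, h, hjk])))
  have hY0 : Y ≠ 0 := fun h => hx0 (hmin _ hx (Or.inr (by simp [pairElt, h, hjk.symm])))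
  obtain ⟨Uj, hUj, a, ha, hXa⟩ := exists_unitary_conj_eq_smul_matA hX hX0
  obtain ⟨Uk, hUk, b, hb, hYb⟩ := exists_unitary_conj_eq_smul_matA hY hY0
  set V : Fin n → Matrix (Fin 2) (Fin 2) ℂ :=
    fun q => if q = j then star Uj else if q = k then star Uk else 1
  have hV : ∀ q, V q ∈ unitaryGroup (Fin 2) ℂ := fun q => by
    simp only [V]
    split_ifs
    exacts [Unitary.star_mem hUj, Unitary.star_mem hUk, one_mem _]
  have hdiagElt : pairElt j k (a • matA) (b • matA) ∈ stab (luApply V ψ) := by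
    have := conjLU_mem_stab hV hx.1
    rwa [conjLU_pairElt hjk, show V j = star Uj by simp [V],
      show V k = star Uk by simp [V, hjk.symm], star_star, star_star, hXa, hYb] at this
  refine HasSingletFactor.of_luApply hV (hasSingletFactor_of_pairSlice_diag_eq_zero hjk
    (luApply_ne_zero hV hψ) ?_ (pairSlice_diag_eq_zero hjk ha hb hdiagElt))
  rwa [finrank_stab_inf_gS_luApply hV]

end BlockToSinglet

theorem stmt10_general {n : ℕ} (ψ : QState n) (hψ : ψ ≠ 0) :
    (∃ S : Set (Fin n), Su2Block ψ S ∧ S.ncard = 2) ↔ HasSingletFactor ψ := by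
  constructor
  · rintro ⟨S, hS, hcard⟩
    obtain ⟨j, k, hjk, rfl⟩ := Set.ncard_eq_two.mp hcard
    exact hasSingletFactor_of_su2Block hjk hψ hS
  · rintro ⟨_, ⟨U, hU, rfl⟩, j, k, hjk, χ, hform⟩
    refine ⟨{j, k}, (su2Block_luApply_iff hU).1 ?_, Set.ncard_pair hjk⟩
    exact su2Block_of_pairSlice_eq_smul_singletMat hjk (luApply_ne_zero hU hψ)
      fun I => ⟨_, pairSlice_eq_smul_singletMat hjk hform I⟩

/-- For `n ≥ 2`, there is an `su(2)` block for `ψ` containing exactly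
2 qubits if and only if `ψ` has a singlet factor. -/
theorem stmt10 {n : ℕ} (hn : 2 ≤ n) (ψ : QState n) (hψ : ψ ≠ 0) :
    (∃ S : Set (Fin n), Su2Block ψ S ∧ S.ncard = 2) ↔ HasSingletFactor ψ :=
  stmt10_general ψ hψ
end
end
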